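/- arXiv:1609.07923 — 3 statements merged into one kernel-verified Lean document; each statement's English description precedes it below -/
import Mathlib

section
/- In the proof of the function-recovery lemma for the graph G_{U₁U₂}^f: for fixed x, u₁ (with x ∈ u₁) and an independent set w of G_{U₁U₂}^f containing some pair with first coordinate u₁, the set A_{x,u₁,w} = {y' : (x,y') ∈ S, and p(u₂'|y') > 0 for some u₂' with (u₁,u₂') ∈ w} satisfies: f(x,y') = f(x,y'') for all y', y'' ∈ A_{x,u₁,w}. -/
/-- In the proof of the function-recovery lemma for `G_{U₁U₂}^f`:
for fixed `x`, `u₁` (with `x ∈ u₁` and `p(u₁|x) > 0`) and an independent set `w`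
of `G_{U₁U₂}^f` containing some pair with first coordinate `u₁`, the function
`f(x,·)` is constant on the set
`A_{x,u₁,w} = {y' : (x,y') ∈ S ∧ ∃ u₂', p(u₂'|y') > 0 ∧ (u₁,u₂') ∈ w}`. -/
theorem stmt7 {𝒳 𝒴 𝒵 : Type*} [Fintype 𝒳] [Fintype 𝒴] [Fintype 𝒵]
    (f : 𝒳 × 𝒴 → 𝒵) (p : 𝒳 × 𝒴 → ℝ) (hp0 : ∀ a, 0 ≤ p a)
    (q₁ : Set 𝒳 → 𝒳 → ℝ) (q₂ : Set 𝒴 → 𝒴 → ℝ)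
    (hq₁0 : ∀ u₁ x, 0 ≤ q₁ u₁ x) (hq₂0 : ∀ u₂ y, 0 ≤ q₂ u₂ y)
    (hq₁ : ∀ u₁ x, 0 < q₁ u₁ x → x ∈ u₁ ∧
      ∀ x' ∈ u₁, ∀ x'' ∈ u₁,
        ¬ (∃ y : 𝒴, 0 < p (x', y) ∧ 0 < p (x'', y) ∧ f (x', y) ≠ f (x'', y)))
    (hq₂ : ∀ u₂ y, 0 < q₂ u₂ y → y ∈ u₂ ∧
      ∀ y' ∈ u₂, ∀ y'' ∈ u₂,
        ¬ (∃ x : 𝒳, 0 < p (x, y') ∧ 0 < p (x, y'') ∧ f (x, y') ≠ f (x, y'')))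
    (AdjU : (Set 𝒳 × Set 𝒴) → (Set 𝒳 × Set 𝒴) → Prop)
    (hAdjU : ∀ a b, AdjU a b ↔
      ∃ x y x' y', 0 < p (x, y) * q₁ a.1 x * q₂ a.2 y ∧
        0 < p (x', y') * q₁ b.1 x' * q₂ b.2 y' ∧
        ((x = x' ∧ a.1 = b.1 ∧ f (x, y) ≠ f (x', y')) ∨
         (y = y' ∧ a.2 = b.2 ∧ f (x, y) ≠ f (x', y'))))
    (x : 𝒳) (u₁ : Set 𝒳) (hx : x ∈ u₁) (hq₁x : 0 < q₁ u₁ x)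
    (w : Set (Set 𝒳 × Set 𝒴))
    (hw : ∀ a ∈ w, ∀ b ∈ w, ¬ AdjU a b)
    (hwu₁ : ∃ u₂, (u₁, u₂) ∈ w) :
    ∀ y' y'' : 𝒴,
      (0 < p (x, y') ∧ ∃ u₂', 0 < q₂ u₂' y' ∧ (u₁, u₂') ∈ w) →
      (0 < p (x, y'') ∧ ∃ u₂'', 0 < q₂ u₂'' y'' ∧ (u₁, u₂'') ∈ w) →
      f (x, y') = f (x, y'') := by
  rintro y' y'' ⟨hp', u₂', hq', hw'⟩ ⟨hp'', u₂'', hq'', hw''⟩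
  by_contra hne
  exact hw _ hw' _ hw'' ((hAdjU (u₁, u₂') (u₁, u₂'')).2
    ⟨x, y', x, y'', by positivity, by positivity, Or.inl ⟨rfl, rfl, hne⟩⟩)
end

section
/- Suppose p(x,y) > 0 for all (x,y) ∈ 𝒳 × 𝒴. Let φ_A : 𝒳ⁿ → M_A, φ_B : 𝒴ⁿ → M_B, φ_C : M_A × M_B → M_C be encoders such that nodes A and B compute f with zero error, i.e., there exist ψ_A, ψ_B with ψ_A(x^n, φ_C(φ_A(x^n), φ_B(y^n))) = (f(x₁,y₁),…,f(xₙ,yₙ)) = ψ_B(y^n, φ_C(φ_A(x^n), φ_B(y^n))) for all (x^n, y^n). Then the function is determined by the messages (φ_A(x^n), φ_B(y^n)): if φ_A(x^n) = φ_A(x'^n) and φ_B(y^n) = φ_B(y'^n), then f(xᵢ,yᵢ) = f(x'ᵢ,y'ᵢ) for all i. -/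
/-- If `p` has full support and nodes A and B compute `f` with zero
error via encoders `φ_A, φ_B, φ_C` and decoders `ψ_A, ψ_B`, then the pair of
messages `(φ_A(x^n), φ_B(y^n))` determines the function values: equal message
pairs force `f(xᵢ,yᵢ) = f(x'ᵢ,y'ᵢ)` in every coordinate. -/
theorem stmt8 {𝒳 𝒴 𝒵 M_A M_B M_C : Type*} [Fintype 𝒳] [Fintype 𝒴] [Fintype 𝒵]
    (f : 𝒳 × 𝒴 → 𝒵) (p : 𝒳 × 𝒴 → ℝ) (hp : ∀ a, 0 < p a)
    (n : ℕ) (hn : 1 ≤ n)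
    (φA : (Fin n → 𝒳) → M_A) (φB : (Fin n → 𝒴) → M_B) (φC : M_A × M_B → M_C)
    (ψA : (Fin n → 𝒳) × M_C → Fin n → 𝒵) (ψB : (Fin n → 𝒴) × M_C → Fin n → 𝒵)
    (hzero : ∀ (x : Fin n → 𝒳) (y : Fin n → 𝒴),
      (∀ i, ψA (x, φC (φA x, φB y)) i = f (x i, y i)) ∧
      (∀ i, ψB (y, φC (φA x, φB y)) i = f (x i, y i))) :
    ∀ (x x' : Fin n → 𝒳) (y y' : Fin n → 𝒴),
      φA x = φA x' → φB y = φB y' → ∀ i, f (x i, y i) = f (x' i, y' i) := by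
  intro x x' y y' hA hB i
  have h1 : f (x i, y i) = f (x i, y' i) := by
    have := (hzero x y).1 i
    rw [hB] at this
    rw [← this, (hzero x y').1 i]
  have h2 : f (x i, y' i) = f (x' i, y' i) := by
    have := (hzero x y').2 i
    rw [hA] at this
    rw [← this, (hzero x' y').2 i]
  rw [h1, h2]
end

section
/- Let G be a graph on finite vertex set 𝒱 with probability distribution P, whose connected components are G₁,…,G_k with P(Gᵢ) = Σ_{x ∈ V(Gᵢ)} P(x) > 0, and let Pᵢ(x) = P(x)/P(Gᵢ) for x ∈ V(Gᵢ). Then the graph entropy satisfies H_G(X) = Σᵢ P(Gᵢ) · H_{Gᵢ}(Xᵢ), where H_G(X) = min I(W;X) over random variables W taking values in independent sets of G with X ∈ W almost surely. -/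
/-!
Lower bound: for any channel `X ↦ W` into independent sets containing `X`, the chain rule over
the component index `C = c(X)` gives `I(W;X) = ∑ᵢ P(Gᵢ) I(W;X | C = i) + I(W;C)`, and by data
processing `I(W;X | C = i) ≥ I(W ∩ V(Gᵢ); X | C = i) ≥ H_{Gᵢ}(Xᵢ)`, because `W ∩ V(Gᵢ)` is an
independent set of `Gᵢ` containing `X`.

Upper bound: glue near-optimal channels `qᵢ` of the components. On an input in `V(Gᵢ)`, run `qᵢ`
inside `V(Gᵢ)` and, independently, draw a sample of the output marginal of `qⱼ` inside every other
`V(Gⱼ)`. The union is independent in `G`, since no edge joins two components. Its law does not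
depend on `C`, and the extra coordinates are noise independent of `X`, so
`I(W;X) = ∑ᵢ P(Gᵢ) I(qᵢ)`.
-/

/-- Graph entropy `H_G(X) = min_{X ∈ W ∈ Γ(G)} I(W;X)`: the infimum of the
mutual information `I(W;X)` over conditional distributions `q(w|x)` supported on
independent sets `w` of `G` containing `x`. -/
noncomputable def graphEntropy {V : Type*} [Fintype V] [DecidableEq V]
    (G : SimpleGraph V) (P : V → ℝ) : ℝ :=
  sInf { r : ℝ | ∃ q : V → Finset V → ℝ,
    (∀ v s, 0 ≤ q v s) ∧ (∀ v, ∑ s : Finset V, q v s = 1) ∧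
    (∀ v s, 0 < q v s → v ∈ s ∧ (↑s : Set V).Pairwise (fun a b => ¬ G.Adj a b)) ∧
    r = ∑ v : V, ∑ s : Finset V,
          P v * q v s * Real.log (q v s / (∑ v' : V, P v' * q v' s)) }

open Finset Real

theorem sum_mul_log_div_sum_le {κ : Type*} (s : Finset κ) (a b : κ → ℝ)
    (ha : ∀ i ∈ s, 0 ≤ a i) (hb : ∀ i ∈ s, 0 ≤ b i) (hab : ∀ i ∈ s, 0 < a i → 0 < b i) :
    (∑ i ∈ s, a i) * log ((∑ i ∈ s, a i) / ∑ i ∈ s, b i) ≤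
      ∑ i ∈ s, a i * log (a i / b i) := by
  rcases (sum_nonneg ha).eq_or_lt with hA | hA
  · have ha0 : ∀ i ∈ s, a i = 0 := (sum_eq_zero_iff_of_nonneg ha).1 hA.symm
    rw [← hA, zero_mul]
    exact sum_nonneg fun i hi => by simp [ha0 i hi]
  set A := ∑ i ∈ s, a i
  set B := ∑ i ∈ s, b i
  have hB : 0 < B := by
    obtain ⟨i, hi, hai⟩ :=
      exists_lt_of_sum_lt (f := fun _ => (0 : ℝ)) (g := a) (by simpa using hA)
    exact (hab i hi hai).trans_le (single_le_sum hb hi)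
  -- `log x ≥ 1 - 1/x` at `x = (a i / b i) / (A / B)`
  have key : ∀ i ∈ s, a i * log (A / B) + a i - b i * (A / B) ≤ a i * log (a i / b i) := by
    intro i hi
    rcases (ha i hi).eq_or_lt with hai | hai
    · rw [← hai]
      simp only [zero_mul, add_zero, zero_sub, neg_nonpos]
      exact mul_nonneg (hb i hi) (by positivity)
    have hbi := hab i hi hai
    have hlog := one_sub_inv_le_log_of_pos (x := a i / b i / (A / B)) (by positivity)
    rw [log_div (by positivity) (by positivity)] at hlog
    have hcancel : a i * (1 - (a i / b i / (A / B))⁻¹) = a i - b i * (A / B) := by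
      field_simp
    linarith [mul_le_mul_of_nonneg_left hlog hai.le]
  calc A * log (A / B) = ∑ i ∈ s, (a i * log (A / B) + a i - b i * (A / B)) := by
        rw [sum_sub_distrib, sum_add_distrib, ← sum_mul, ← sum_mul]
        field_simp
        ring
    _ ≤ _ := sum_le_sum key

section Channel

variable {α β γ : Type*}

structure IsChannel [Fintype β] (q : α → β → ℝ) : Prop where
  nonneg : ∀ a b, 0 ≤ q a b
  sum_eq_one : ∀ a, ∑ b, q a b = 1

lemma IsChannel.comp [Fintype β] {α' : Type*} {q : α → β → ℝ} (hq : IsChannel q)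
    (f : α' → α) : IsChannel fun a => q (f a) :=
  ⟨fun a => hq.nonneg (f a), fun a => hq.sum_eq_one (f a)⟩

variable [Fintype α]

def marginal (P : α → ℝ) (q : α → β → ℝ) (b : β) : ℝ := ∑ a, P a * q a b

noncomputable def mutualInfo [Fintype β] (P : α → ℝ) (q : α → β → ℝ) : ℝ :=
  ∑ a, ∑ b, P a * q a b * log (q a b / marginal P q b)

def pushforward [Fintype β] [DecidableEq γ] (f : β → γ) (q : α → β → ℝ) (a : α) (c : γ) : ℝ :=
  ∑ b with f b = c, q a b

variable {P : α → ℝ} {q : α → β → ℝ}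

lemma marginal_nonneg (hP : ∀ a, 0 ≤ P a) (hq : ∀ a b, 0 ≤ q a b) (b : β) :
    0 ≤ marginal P q b :=
  sum_nonneg fun a _ => mul_nonneg (hP a) (hq a b)

lemma mul_le_marginal (hP : ∀ a, 0 ≤ P a) (hq : ∀ a b, 0 ≤ q a b) (a : α) (b : β) :
    P a * q a b ≤ marginal P q b :=
  single_le_sum (f := fun a => P a * q a b) (fun a _ => mul_nonneg (hP a) (hq a b)) (mem_univ a)

lemma exists_pos_of_marginal_pos (hP : ∀ a, 0 ≤ P a) {b : β} (h : 0 < marginal P q b) :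
    ∃ a, 0 < q a b := by
  obtain ⟨a, -, ha⟩ := exists_lt_of_sum_lt (f := fun _ => (0 : ℝ)) (g := fun a => P a * q a b)
    (by simpa [marginal] using h)
  exact ⟨a, pos_of_mul_pos_right ha (hP a)⟩

lemma IsChannel.sum_marginal [Fintype β] (hq : IsChannel q) :
    ∑ b, marginal P q b = ∑ a, P a := by
  simp only [marginal]
  rw [sum_comm]
  simp [← mul_sum, hq.sum_eq_one]

lemma marginal_pushforward [Fintype β] [DecidableEq γ] (f : β → γ) (c : γ) :
    marginal P (pushforward f q) c = ∑ b with f b = c, marginal P q b := by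
  simp only [marginal, pushforward, mul_sum]
  exact sum_comm

theorem mutualInfo_pushforward_le [Fintype β] [Fintype γ] [DecidableEq γ] (f : β → γ)
    (hP : ∀ a, 0 ≤ P a) (hq : ∀ a b, 0 ≤ q a b) :
    mutualInfo P (pushforward f q) ≤ mutualInfo P q := by
  refine sum_le_sum fun a _ => ?_
  rw [← sum_fiberwise univ f]
  refine sum_le_sum fun c _ => ?_
  rcases (hP a).eq_or_lt with hPa | hPa
  · simp [← hPa]
  simp only [mul_assoc (P a), ← mul_sum]
  refine mul_le_mul_of_nonneg_left ?_ hPa.le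
  rw [marginal_pushforward]
  exact sum_mul_log_div_sum_le _ _ _ (fun b _ => hq a b) (fun b _ => marginal_nonneg hP hq b)
    fun b _ hb => (mul_pos hPa hb).trans_le (mul_le_marginal hP hq a b)

lemma mutualInfo_const [Fintype β] (hP : ∑ a, P a = 1) (r : β → ℝ) :
    mutualInfo P (fun _ => r) = 0 := by
  have hM : marginal P (fun _ => r) = r := by
    ext b
    simp [marginal, ← sum_mul, hP]
  simp [mutualInfo, hM, log_div_self]

-- Data processing into a one-point space.
theorem IsChannel.mutualInfo_nonneg [Fintype β] (hq : IsChannel q) (hP0 : ∀ a, 0 ≤ P a)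
    (hP1 : ∑ a, P a = 1) : 0 ≤ mutualInfo P q := by
  have h : pushforward (fun _ : β => ()) q = fun _ _ => 1 := by
    ext a u
    simp [pushforward, hq.sum_eq_one]
  calc 0 = mutualInfo P (pushforward (fun _ : β => ()) q) := by rw [h, mutualInfo_const hP1]
    _ ≤ mutualInfo P q := mutualInfo_pushforward_le _ hP0 hq.nonneg

lemma mutualInfo_comp_equiv [Fintype β] [Fintype γ] (e : β ≃ γ) (P : α → ℝ) (q : α → γ → ℝ) :
    mutualInfo P (fun a b => q a (e b)) = mutualInfo P q :=
  sum_congr rfl fun a _ => e.sum_comp fun c => P a * q a c * log (q a c / marginal P q c)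

lemma mutualInfo_mul_right [Fintype β] [Fintype γ] (P : α → ℝ) (q : α → β → ℝ) {r : γ → ℝ}
    (hr0 : ∀ c, 0 ≤ r c) (hr1 : ∑ c, r c = 1) :
    mutualInfo P (fun a (x : β × γ) => q a x.1 * r x.2) = mutualInfo P q := by
  have hM : ∀ x : β × γ,
      marginal P (fun a (x : β × γ) => q a x.1 * r x.2) x = marginal P q x.1 * r x.2 := by
    intro x
    simp only [marginal, sum_mul, mul_assoc]
  have hterm : ∀ a b c, P a * (q a b * r c) * log (q a b * r c / (marginal P q b * r c)) =
      P a * q a b * log (q a b / marginal P q b) * r c := by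
    intro a b c
    rcases (hr0 c).eq_or_lt with hc | hc
    · simp [← hc]
    · rw [mul_div_mul_right _ _ hc.ne']
      ring
  simp only [mutualInfo, hM, hterm, Fintype.sum_prod_type, ← mul_sum, hr1, mul_one]

end Channel

section Fibers

variable {α β ι : Type*} [Fintype α] [DecidableEq ι] (c : α → ι) (P : α → ℝ)

def fiberWeight (i : ι) : ℝ := ∑ a with c a = i, P a

noncomputable def condWeight (i : ι) (a : {a // c a = i}) : ℝ := P a / fiberWeight c P i

variable {c P}

lemma fiberWeight_eq_sum_subtype (i : ι) : fiberWeight c P i = ∑ a : {a // c a = i}, P a :=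
  sum_subtype _ (by simp) P

lemma sum_fiberWeight [Fintype ι] : ∑ i, fiberWeight c P i = ∑ a, P a :=
  sum_fiberwise univ c P

lemma fiberWeight_nonneg (hP : ∀ a, 0 ≤ P a) (i : ι) : 0 ≤ fiberWeight c P i :=
  sum_nonneg fun a _ => hP a

lemma condWeight_nonneg (hP : ∀ a, 0 ≤ P a) (i : ι) (a : {a // c a = i}) :
    0 ≤ condWeight c P i a :=
  div_nonneg (hP a) (fiberWeight_nonneg hP i)

lemma sum_condWeight {i : ι} (hi : fiberWeight c P i ≠ 0) : ∑ a, condWeight c P i a = 1 := by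
  unfold condWeight
  rw [← sum_div, ← fiberWeight_eq_sum_subtype, div_self hi]

lemma fiberWeight_mul_marginal_condWeight {i : ι} (hi : fiberWeight c P i ≠ 0)
    (q : {a // c a = i} → β → ℝ) (b : β) :
    fiberWeight c P i * marginal (condWeight c P i) q b = ∑ a : {a // c a = i}, P a * q a b := by
  simp only [marginal, condWeight, mul_sum]
  exact sum_congr rfl fun a _ => by field_simp

lemma sum_marginal_condWeight [Fintype β] {i : ι} (hi : fiberWeight c P i ≠ 0)
    {q : {a // c a = i} → β → ℝ} (hq : IsChannel q) :
    ∑ b, marginal (condWeight c P i) q b = 1 := by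
  rw [hq.sum_marginal, sum_condWeight hi]

lemma isChannel_marginal_condWeight [Fintype β] (hP : ∀ a, 0 ≤ P a)
    (hw : ∀ i, fiberWeight c P i ≠ 0) {q : α → β → ℝ} (hq : IsChannel q) :
    IsChannel fun i => marginal (condWeight c P i) fun a : {a // c a = i} => q a where
  nonneg i := marginal_nonneg (condWeight_nonneg hP i) fun a => hq.nonneg a
  sum_eq_one i := sum_marginal_condWeight (hw i) (hq.comp Subtype.val)

theorem mutualInfo_eq_sum_fiberWeight_mul_add [Fintype β] [Fintype ι] {q : α → β → ℝ}
    (hP : ∀ a, 0 ≤ P a) (hq : ∀ a b, 0 ≤ q a b) (hw : ∀ i, 0 < fiberWeight c P i) :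
    mutualInfo P q =
      ∑ i, fiberWeight c P i * mutualInfo (condWeight c P i) (fun a : {a // c a = i} => q a) +
        mutualInfo (fiberWeight c P) fun i =>
          marginal (condWeight c P i) fun a : {a // c a = i} => q a := by
  set M := fun i => marginal (condWeight c P i) fun a : {a // c a = i} => q a
  have hwM : ∀ i b, fiberWeight c P i * M i b = ∑ a : {a // c a = i}, P a * q a b :=
    fun i b => fiberWeight_mul_marginal_condWeight (hw i).ne' _ b
  have hmarg : marginal (fiberWeight c P) M = marginal P q := by
    ext b
    simp only [marginal] at hwM ⊢
    rw [← Fintype.sum_fiberwise c]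
    exact sum_congr rfl fun i _ => hwM i b
  have hsplit : ∀ i (a : {a // c a = i}) b,
      P a * q a b * log (q a b / marginal P q b) =
        P a * q a b * log (q a b / M i b) + P a * q a b * log (M i b / marginal P q b) := by
    intro i a b
    rcases (mul_nonneg (hP a) (hq a b)).eq_or_lt with h | h
    · simp [← h]
    have hqab : 0 < q a b := pos_of_mul_pos_right h (hP a)
    have hMi : 0 < M i b := by
      refine pos_of_mul_pos_right ?_ (hw i).le
      rw [hwM]
      exact h.trans_le (single_le_sum (f := fun a : {a // c a = i} => P a * q a b)
        (fun a _ => mul_nonneg (hP a) (hq a b)) (mem_univ a))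
    have hM : 0 < marginal P q b := h.trans_le (mul_le_marginal hP hq a b)
    rw [← mul_add, ← log_mul (by positivity) (by positivity), div_mul_div_cancel₀ hMi.ne']
  calc mutualInfo P q
      = ∑ i, ∑ a : {a // c a = i}, ∑ b, P a * q a b * log (q a b / marginal P q b) :=
        (Fintype.sum_fiberwise c _).symm
    _ = ∑ i, (∑ a : {a // c a = i}, ∑ b, P a * q a b * log (q a b / M i b) +
          ∑ b, (∑ a : {a // c a = i}, P a * q a b) * log (M i b / marginal P q b)) := by
        simp only [hsplit, sum_add_distrib, sum_mul]
        exact congrArg _ (sum_congr rfl fun i _ => sum_comm)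
    _ = _ := by
        rw [sum_add_distrib]
        congr 1
        · refine sum_congr rfl fun i _ => ?_
          simp only [mutualInfo, condWeight, mul_sum, M]
          refine sum_congr rfl fun a _ => sum_congr rfl fun b _ => ?_
          field_simp [(hw i).ne']
        · simp only [mutualInfo, hmarg, hwM]

end Fibers

section Glue

variable {α ι : Type*} [Fintype α] [Fintype ι] [DecidableEq ι] {β : ι → Type*}
  {c : α → ι} {P : α → ℝ}

variable (c P) in
noncomputable def gluedChannel (q : ∀ i, {a // c a = i} → β i → ℝ) (a : α) (p : ∀ i, β i) :
    ℝ :=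
  ∏ j, (if h : c a = j then q j ⟨a, h⟩ else marginal (condWeight c P j) (q j)) (p j)

variable {q : ∀ i, {a // c a = i} → β i → ℝ}

lemma gluedChannel_apply {i : ι} (a : {a // c a = i}) (p : ∀ i, β i) :
    gluedChannel c P q a p =
      q i a (p i) * ∏ j : {j // j ≠ i}, marginal (condWeight c P j) (q j) (p j) := by
  rw [gluedChannel, Fintype.prod_eq_mul_prod_subtype_ne _ i, dif_pos a.2]
  exact congrArg _ (prod_congr rfl fun j _ => by
    rw [dif_neg fun h : c a = j => j.2 (h.symm.trans a.2)])

lemma isChannel_gluedChannel [∀ i, Fintype (β i)] (hP : ∀ a, 0 ≤ P a)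
    (hw : ∀ i, fiberWeight c P i ≠ 0) (hq : ∀ i, IsChannel (q i)) :
    IsChannel (gluedChannel c P q) where
  nonneg a p := prod_nonneg fun j _ => by
    split_ifs
    · exact (hq j).nonneg _ _
    · exact marginal_nonneg (condWeight_nonneg hP j) (hq j).nonneg _
  sum_eq_one a := by
    simp only [gluedChannel]
    rw [← Fintype.prod_sum]
    refine prod_eq_one fun j _ => ?_
    split_ifs
    · exact (hq j).sum_eq_one _
    · exact sum_marginal_condWeight (hw j) (hq j)

lemma gluedChannel_pos [∀ i, Fintype (β i)] (hP : ∀ a, 0 ≤ P a) (hq : ∀ i, IsChannel (q i))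
    {a : α} {p : ∀ i, β i} (h : 0 < gluedChannel c P q a p) :
    0 < q (c a) ⟨a, rfl⟩ (p (c a)) ∧ ∀ j, ∃ b, 0 < q j b (p j) := by
  rw [gluedChannel_apply (⟨a, rfl⟩ : {b // c b = c a})] at h
  have hm : ∀ j, 0 ≤ marginal (condWeight c P j) (q j) (p j) := fun j =>
    marginal_nonneg (condWeight_nonneg hP j) (hq j).nonneg _
  have hown := pos_of_mul_pos_left h (prod_nonneg fun j _ => hm j)
  have hothers := pos_of_mul_pos_right h ((hq _).nonneg _ _)
  refine ⟨hown, fun j => ?_⟩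
  by_cases hj : j = c a
  · subst hj
    exact ⟨_, hown⟩
  · refine exists_pos_of_marginal_pos (condWeight_nonneg hP j) ((hm j).lt_of_ne ?_)
    exact (prod_ne_zero_iff.1 hothers.ne' ⟨j, hj⟩ (mem_univ _)).symm

theorem mutualInfo_gluedChannel [∀ i, Fintype (β i)] (hP0 : ∀ a, 0 ≤ P a)
    (hP1 : ∑ a, P a = 1) (hw : ∀ i, 0 < fiberWeight c P i) (hq : ∀ i, IsChannel (q i)) :
    mutualInfo P (gluedChannel c P q) =
      ∑ i, fiberWeight c P i * mutualInfo (condWeight c P i) (q i) := by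
  set m := fun j => marginal (condWeight c P j) (q j)
  have hm0 : ∀ j t, 0 ≤ m j t := fun j =>
    marginal_nonneg (condWeight_nonneg hP0 j) (hq j).nonneg
  have hm1 : ∀ j, ∑ t, m j t = 1 := fun j => sum_marginal_condWeight (hw j).ne' (hq j)
  have hnoise : ∀ i, mutualInfo (condWeight c P i) (fun a => gluedChannel c P q a) =
      mutualInfo (condWeight c P i) (q i) := by
    intro i
    rw [← mutualInfo_mul_right (condWeight c P i) (q i)
      (r := fun x : ∀ j : {j // j ≠ i}, β j => ∏ j : {j // j ≠ i}, m j (x j))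
      (fun x => prod_nonneg fun j _ => hm0 j _)
      (by rw [← Fintype.prod_sum]; exact prod_eq_one fun j _ => hm1 j),
      ← mutualInfo_comp_equiv (Equiv.piSplitAt i β)]
    congr
    ext a p
    exact gluedChannel_apply a p
  have hindep : (fun i => marginal (condWeight c P i) fun a => gluedChannel c P q a) =
      fun _ p => ∏ j, m j (p j) := by
    ext i p
    simp only [marginal, gluedChannel_apply, ← mul_assoc, ← sum_mul]
    rw [Fintype.prod_eq_mul_prod_subtype_ne _ i]
    rfl
  have hchan := isChannel_gluedChannel hP0 (fun i => (hw i).ne') hq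
  rw [mutualInfo_eq_sum_fiberWeight_mul_add hP0 hchan.nonneg hw, hindep,
    mutualInfo_const (by rw [sum_fiberWeight, hP1]), add_zero]
  simp_rw [hnoise]

end Glue

def finsetEquivPiSubtype {α ι : Type*} [Fintype α] [DecidableEq α] [DecidableEq ι]
    (c : α → ι) : Finset α ≃ ∀ i, Finset {a // c a = i} where
  toFun s i := s.subtype (c · = i)
  invFun p := {a | ⟨a, rfl⟩ ∈ p (c a)}
  left_inv s := by ext a; simp
  right_inv p := by
    ext i ⟨a, rfl⟩
    simp

namespace SimpleGraph

variable {V : Type*}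

lemma isIndepSet_of_forall_subtype {G : SimpleGraph V} {ι : Type*} [DecidableEq ι]
    {c : V → ι} (hc : ∀ u v, G.Adj u v → c u = c v) {s : Finset V}
    (h : ∀ i, (G.comap (Subtype.val : {v // c v = i} → V)).IsIndepSet
      (s.subtype (c · = i) : Set _)) :
    G.IsIndepSet (s : Set V) := by
  intro a ha b hb hab hadj
  have ha' : (⟨a, rfl⟩ : {v // c v = c a}) ∈ s.subtype (c · = c a) := mem_subtype.2 ha
  have hb' : (⟨b, (hc a b hadj).symm⟩ : {v // c v = c a}) ∈ s.subtype (c · = c a) :=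
    mem_subtype.2 hb
  exact h (c a) ha' hb' (fun h => hab (congrArg Subtype.val h)) hadj

variable [Fintype V]

structure IsIndepSetChannel (G : SimpleGraph V) (q : V → Finset V → ℝ) : Prop
    extends IsChannel q where
  mem_isIndepSet_of_pos : ∀ v s, 0 < q v s → v ∈ s ∧ G.IsIndepSet (s : Set V)

variable [DecidableEq V] {G : SimpleGraph V} {P : V → ℝ}

variable (G) in
lemma isIndepSetChannel_singleton :
    G.IsIndepSetChannel fun v s => if s = {v} then 1 else 0 where
  nonneg v s := by positivity
  sum_eq_one v := by simp
  mem_isIndepSet_of_pos v s h := by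
    obtain rfl : s = {v} := by
      by_contra hs
      simp [hs] at h
    simp

variable (G P) in
lemma nonempty_mutualInfo_image : (mutualInfo P '' {q | G.IsIndepSetChannel q}).Nonempty :=
  ⟨_, _, isIndepSetChannel_singleton G, rfl⟩

variable (G P) in
lemma graphEntropy_eq_sInf :
    graphEntropy G P = sInf (mutualInfo P '' {q | G.IsIndepSetChannel q}) := by
  unfold graphEntropy
  congr 1
  ext r
  simp only [Set.mem_image]
  constructor
  · rintro ⟨q, h0, h1, h2, rfl⟩
    exact ⟨q, ⟨⟨h0, h1⟩, h2⟩, rfl⟩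
  · rintro ⟨q, ⟨⟨h0, h1⟩, h2⟩, rfl⟩
    exact ⟨q, h0, h1, h2, rfl⟩

lemma graphEntropy_le_mutualInfo (hP0 : ∀ v, 0 ≤ P v) (hP1 : ∑ v, P v = 1)
    {q : V → Finset V → ℝ} (hq : G.IsIndepSetChannel q) :
    graphEntropy G P ≤ mutualInfo P q := by
  rw [graphEntropy_eq_sInf]
  refine csInf_le ⟨0, ?_⟩ ⟨q, hq, rfl⟩
  rintro _ ⟨q', hq', rfl⟩
  exact hq'.mutualInfo_nonneg hP0 hP1

lemma le_graphEntropy {x : ℝ} (h : ∀ q, G.IsIndepSetChannel q → x ≤ mutualInfo P q) :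
    x ≤ graphEntropy G P := by
  rw [graphEntropy_eq_sInf]
  refine le_csInf (nonempty_mutualInfo_image G P) ?_
  rintro _ ⟨q, hq, rfl⟩
  exact h q hq

lemma exists_mutualInfo_lt_graphEntropy_add {ε : ℝ} (hε : 0 < ε) :
    ∃ q, G.IsIndepSetChannel q ∧ mutualInfo P q < graphEntropy G P + ε := by
  rw [graphEntropy_eq_sInf]
  obtain ⟨_, ⟨q, hq, rfl⟩, hlt⟩ := Real.lt_sInf_add_pos (nonempty_mutualInfo_image G P) hε
  exact ⟨q, hq, hlt⟩

lemma IsIndepSetChannel.restrict {Q : V → Finset V → ℝ} (hQ : G.IsIndepSetChannel Q)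
    (p : V → Prop) [DecidablePred p] :
    (G.comap (Subtype.val : Subtype p → V)).IsIndepSetChannel
      (pushforward (Finset.subtype p) fun v : Subtype p => Q v) where
  nonneg v t := sum_nonneg fun s _ => hQ.nonneg v s
  sum_eq_one v := (sum_fiberwise univ (Finset.subtype p) (Q v)).trans (hQ.sum_eq_one v)
  mem_isIndepSet_of_pos v t h := by
    obtain ⟨s, hs, hpos⟩ := exists_lt_of_sum_lt (f := fun _ => (0 : ℝ)) (g := fun s => Q v s)
      (by simpa [pushforward] using h)
    obtain ⟨hv, hind⟩ := hQ.mem_isIndepSet_of_pos v s hpos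
    obtain rfl : s.subtype p = t := (mem_filter.1 hs).2
    exact ⟨mem_subtype.2 hv, fun a ha b hb hab =>
      hind (mem_subtype.1 ha) (mem_subtype.1 hb) (Subtype.val_injective.ne hab)⟩

variable {ι : Type*} [Fintype ι] [DecidableEq ι] {c : V → ι}

lemma isIndepSetChannel_gluedChannel (hc : ∀ u v, G.Adj u v → c u = c v)
    (hP : ∀ v, 0 ≤ P v) (hw : ∀ i, fiberWeight c P i ≠ 0)
    {q : ∀ i, {v // c v = i} → Finset {v // c v = i} → ℝ}
    (hq : ∀ i, (G.comap (Subtype.val : {v // c v = i} → V)).IsIndepSetChannel (q i)) :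
    G.IsIndepSetChannel fun v s => gluedChannel c P q v (finsetEquivPiSubtype c s) := by
  have hchan := isChannel_gluedChannel hP hw fun i => (hq i).toIsChannel
  refine ⟨⟨fun v s => hchan.nonneg _ _, fun v => ?_⟩, fun v s h => ?_⟩
  · rw [(finsetEquivPiSubtype c).sum_comp (gluedChannel c P q v)]
    exact hchan.sum_eq_one v
  · obtain ⟨hv, hcomp⟩ := gluedChannel_pos hP (fun i => (hq i).toIsChannel) h
    refine ⟨mem_subtype.1 ((hq (c v)).mem_isIndepSet_of_pos _ _ hv).1,
      isIndepSet_of_forall_subtype hc fun i => ?_⟩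
    obtain ⟨b, hb⟩ := hcomp i
    exact ((hq i).mem_isIndepSet_of_pos b _ hb).2

theorem graphEntropy_le_sum_fiberWeight_mul (hc : ∀ u v, G.Adj u v → c u = c v)
    (hP0 : ∀ v, 0 ≤ P v) (hP1 : ∑ v, P v = 1) (hw : ∀ i, 0 < fiberWeight c P i) :
    graphEntropy G P ≤ ∑ i, fiberWeight c P i *
      graphEntropy (G.comap (Subtype.val : {v // c v = i} → V)) (condWeight c P i) := by
  refine le_of_forall_pos_le_add fun ε hε => ?_
  choose q hq hlt using fun i => exists_mutualInfo_lt_graphEntropy_add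
    (G := G.comap (Subtype.val : {v // c v = i} → V)) (P := condWeight c P i) hε
  calc graphEntropy G P
      ≤ mutualInfo P fun v s => gluedChannel c P q v (finsetEquivPiSubtype c s) :=
        graphEntropy_le_mutualInfo hP0 hP1
          (isIndepSetChannel_gluedChannel hc hP0 (fun i => (hw i).ne') hq)
    _ = ∑ i, fiberWeight c P i * mutualInfo (condWeight c P i) (q i) := by
        rw [mutualInfo_comp_equiv,
          mutualInfo_gluedChannel hP0 hP1 hw fun i => (hq i).toIsChannel]
    _ ≤ ∑ i, fiberWeight c P i *
          (graphEntropy (G.comap (Subtype.val : {v // c v = i} → V)) (condWeight c P i) + ε) := by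
        gcongr with i
        · exact (hw i).le
        · exact (hlt i).le
    _ = _ := by
        simp only [mul_add, sum_add_distrib, ← sum_mul, sum_fiberWeight, hP1, one_mul]

theorem sum_fiberWeight_mul_le_graphEntropy (hP0 : ∀ v, 0 ≤ P v) (hP1 : ∑ v, P v = 1)
    (hw : ∀ i, 0 < fiberWeight c P i) :
    ∑ i, fiberWeight c P i *
      graphEntropy (G.comap (Subtype.val : {v // c v = i} → V)) (condWeight c P i) ≤
        graphEntropy G P := by
  refine le_graphEntropy fun Q hQ => ?_
  rw [mutualInfo_eq_sum_fiberWeight_mul_add hP0 hQ.nonneg hw]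
  refine le_add_of_le_of_nonneg (sum_le_sum fun i _ => ?_)
    ((isChannel_marginal_condWeight hP0 (fun i => (hw i).ne') hQ.toIsChannel).mutualInfo_nonneg
      (fiberWeight_nonneg hP0) (by rw [sum_fiberWeight, hP1]))
  refine mul_le_mul_of_nonneg_left ?_ (hw i).le
  calc _ ≤ mutualInfo (condWeight c P i)
        (pushforward (Finset.subtype (c · = i)) fun v : {v // c v = i} => Q v) :=
        graphEntropy_le_mutualInfo (condWeight_nonneg hP0 i) (sum_condWeight (hw i).ne')
          (hQ.restrict _)
    _ ≤ _ := mutualInfo_pushforward_le _ (condWeight_nonneg hP0 i) fun v => hQ.nonneg v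

end SimpleGraph

/-- If the connected components of `G` are `G₁, …, G_k` (indexed
by `c : V → Fin k`) with `P(Gᵢ) > 0`, then
`H_G(X) = Σᵢ P(Gᵢ) · H_{Gᵢ}(Xᵢ)` where `Xᵢ` has distribution `P(x)/P(Gᵢ)` on
the component `Gᵢ`. -/
theorem stmt12 {V : Type*} [Fintype V] [DecidableEq V]
    (G : SimpleGraph V) (P : V → ℝ)
    (hP0 : ∀ v, 0 ≤ P v) (hP1 : ∑ v, P v = 1)
    (k : ℕ) (c : V → Fin k)
    (hc : ∀ u v : V, G.Reachable u v ↔ c u = c v)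
    (hpos : ∀ i : Fin k, 0 < ∑ v ∈ Finset.univ.filter (fun v => c v = i), P v) :
    graphEntropy G P =
      ∑ i : Fin k,
        (∑ v ∈ Finset.univ.filter (fun v => c v = i), P v) *
          graphEntropy (G.comap (Subtype.val : {v // c v = i} → V))
            (fun v => P v.1 / ∑ v' ∈ Finset.univ.filter (fun v' => c v' = i), P v') := by
  have hadj : ∀ u v, G.Adj u v → c u = c v := fun u v h => (hc u v).1 h.reachable
  exact le_antisymm (G.graphEntropy_le_sum_fiberWeight_mul hadj hP0 hP1 hpos)
    (G.sum_fiberWeight_mul_le_graphEntropy hP0 hP1 hpos)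
end
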